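/- Let τ > 0 and f, g : [-τ,∞) → ℝ be continuous with f(-τ) > 0. If Λ₁ and Λ₂ are two continuous functions on [-τ, ∞), differentiable on (-τ,∞), both satisfying (1 + u/τ)·Λ'(u) + f(u)·Λ(u) - g(u) = 0 for all u > -τ, then Λ₁ = Λ₂ on [-τ, ∞). -/

import Mathlib

/-!
The difference `Δ = Λ₁ - Λ₂` solves `(u - a) Δ' + c Δ = 0` with `a = -τ`, `c = τ f` and `c a > 0`.
On `[a, B]` choose `k > 0` and `M` with `k ≤ 2c(u) + M (u - a)`; then the weighted energy
`(u - a)^k e^{-Mu} Δ(u)²` is nonincreasing. It vanishes at the singular point `u = a` and is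
nonnegative, so it vanishes on all of `[a, B]`.
-/

open Set Real

theorem exists_pos_le_add_mul_sub {h : ℝ → ℝ} {a B : ℝ} (hh : ContinuousOn h (Icc a B))
    (haB : a ≤ B) (ha : 0 < h a) : ∃ k > 0, ∃ M, ∀ u ∈ Icc a B, k ≤ h u + M * (u - a) := by
  obtain ⟨δ, hδ, hnear⟩ := Metric.continuousWithinAt_iff.1 (hh a (left_mem_Icc.2 haB)) _
    (half_pos ha)
  obtain ⟨L, hL⟩ := isCompact_Icc.bddBelow_image hh
  refine ⟨h a / 2, half_pos ha, |h a / 2 - L| / δ, fun u hu => ?_⟩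
  have hLu : L ≤ h u := hL ⟨u, hu, rfl⟩
  have hMnonneg : 0 ≤ |h a / 2 - L| / δ := by positivity
  -- near `a` we have `h > h a / 2`; beyond distance `δ`, the term `M (u - a)` makes up for `L`
  rcases lt_or_ge (u - a) δ with hua | hua
  · have hdist : dist u a < δ := by
      rw [Real.dist_eq, abs_of_nonneg (sub_nonneg.2 hu.1)]; exact hua
    have := (abs_sub_lt_iff.1 (hnear hu hdist)).2
    nlinarith [sub_nonneg.2 hu.1]
  · have : |h a / 2 - L| ≤ |h a / 2 - L| / δ * (u - a) := by
      rw [div_mul_eq_mul_div, le_div_iff₀ hδ]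
      exact mul_le_mul_of_nonneg_left hua (abs_nonneg _)
    linarith [le_abs_self (h a / 2 - L)]

section
variable {a : ℝ} {c Δ : ℝ → ℝ}

theorem hasDerivAt_weighted_sq_nonpos {k M u : ℝ} (hau : a < u)
    (hkM : k ≤ 2 * c u + M * (u - a)) {d : ℝ} (hd : HasDerivAt Δ d u)
    (hode : (u - a) * d + c u * Δ u = 0) :
    ∃ d' ≤ 0, HasDerivAt (fun v => (v - a) ^ k * exp (-(M * v)) * Δ v ^ 2) d' u := by
  have hpos : 0 < u - a := sub_pos.2 hau
  set w := (u - a) ^ (k - 1) * exp (-(M * u))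
  refine ⟨-(w * (Δ u ^ 2 * (2 * c u + M * (u - a) - k))), ?_, ?_⟩
  · have : 0 ≤ 2 * c u + M * (u - a) - k := by linarith
    exact neg_nonpos.2 (by positivity)
  have hpow : HasDerivAt (fun v => (v - a) ^ k) (1 * k * (u - a) ^ (k - 1)) u :=
    ((hasDerivAt_id' u).sub_const a).rpow_const (Or.inl hpos.ne')
  have hexp : HasDerivAt (fun v => exp (-(M * v))) (exp (-(M * u)) * -(M * 1)) u :=
    ((hasDerivAt_id' u).const_mul M).neg.exp
  refine ((hpow.mul hexp).mul (hd.pow 2)).congr_deriv ?_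
  have hsplit : (u - a) ^ k = (u - a) ^ (k - 1) * (u - a) := by
    rw [← rpow_add_one hpos.ne', sub_add_cancel]
  rw [Pi.pow_apply, Pi.mul_apply, hsplit]
  linear_combination (2 * w * Δ u) * hode

theorem eq_zero_of_singular_ode_Icc {B : ℝ} (haB : a < B) (hc : ContinuousOn c (Icc a B))
    (hca : 0 < c a) (hΔ : ContinuousOn Δ (Icc a B))
    (hode : ∀ u ∈ Ioo a B, ∃ d, HasDerivAt Δ d u ∧ (u - a) * d + c u * Δ u = 0) :
    Δ B = 0 := by
  obtain ⟨k, hk, M, hkM⟩ :=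
    exists_pos_le_add_mul_sub (continuousOn_const.mul hc) haB.le (by positivity : 0 < 2 * c a)
  set G := fun v => (v - a) ^ k * exp (-(M * v)) * Δ v ^ 2
  have hderiv : ∀ u ∈ Ioo a B, ∃ d' ≤ 0, HasDerivAt G d' u := fun u hu => by
    obtain ⟨d, hd, hdu⟩ := hode u hu
    exact hasDerivAt_weighted_sq_nonpos hu.1 (hkM u (Ioo_subset_Icc_self hu)) hd hdu
  have hGcont : ContinuousOn G (Icc a B) :=
    (((continuousOn_id.sub continuousOn_const).rpow_const fun _ _ => Or.inr hk.le).mul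
      (continuous_exp.comp_continuousOn (continuousOn_const.mul continuousOn_id).neg)).mul
      (hΔ.pow 2)
  have hanti : AntitoneOn G (Icc a B) := by
    refine antitoneOn_of_deriv_nonpos (convex_Icc a B) hGcont ?_ ?_ <;> rw [interior_Icc]
    · intro u hu
      obtain ⟨d', -, hG⟩ := hderiv u hu
      exact hG.differentiableAt.differentiableWithinAt
    · intro u hu
      obtain ⟨d', hd', hG⟩ := hderiv u hu
      exact hG.deriv ▸ hd'
  have hGB : G B ≤ 0 := by
    have hGa : G a = 0 := by simp [G, zero_rpow hk.ne']
    exact hGa ▸ hanti (left_mem_Icc.2 haB.le) (right_mem_Icc.2 haB.le) haB.le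
  have hw : 0 < (B - a) ^ k * exp (-(M * B)) := by
    have := sub_pos.2 haB
    positivity
  exact pow_eq_zero_iff two_ne_zero |>.1 <|
    le_antisymm (nonpos_of_mul_nonpos_right hGB hw) (sq_nonneg _)

theorem eqOn_zero_of_singular_ode (hc : ContinuousOn c (Ici a)) (hca : 0 < c a)
    (hΔ : ContinuousOn Δ (Ici a))
    (hode : ∀ u, a < u → ∃ d, HasDerivAt Δ d u ∧ (u - a) * d + c u * Δ u = 0) :
    EqOn Δ 0 (Ici a) := by
  have hIoi : EqOn Δ 0 (Ioi a) := fun u hu =>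
    eq_zero_of_singular_ode_Icc hu (hc.mono Icc_subset_Ici_self) hca
      (hΔ.mono Icc_subset_Ici_self) fun v hv => hode v hv.1
  exact hIoi.of_subset_closure hΔ continuousOn_const Ioi_subset_Ici_self (closure_Ioi a).ge

end

theorem stmt1_general (τ : ℝ) (hτ : 0 < τ) (f g : ℝ → ℝ)
    (hf : ContinuousOn f (Set.Ici (-τ)))
    (hfτ : 0 < f (-τ))
    (Λ₁ Λ₂ : ℝ → ℝ)
    (hc₁ : ContinuousOn Λ₁ (Set.Ici (-τ))) (hc₂ : ContinuousOn Λ₂ (Set.Ici (-τ)))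
    (hd₁ : ∀ u, -τ < u → ∃ d : ℝ, HasDerivAt Λ₁ d u ∧
      (1 + u / τ) * d + f u * Λ₁ u - g u = 0)
    (hd₂ : ∀ u, -τ < u → ∃ d : ℝ, HasDerivAt Λ₂ d u ∧
      (1 + u / τ) * d + f u * Λ₂ u - g u = 0) :
    ∀ u ∈ Set.Ici (-τ), Λ₁ u = Λ₂ u := by
  have hode : ∀ u, -τ < u → ∃ d, HasDerivAt (Λ₁ - Λ₂) d u ∧
      (u - -τ) * d + τ * f u * (Λ₁ - Λ₂) u = 0 := fun u hu => by
    obtain ⟨d₁, hΛ₁, he₁⟩ := hd₁ u hu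
    obtain ⟨d₂, hΛ₂, he₂⟩ := hd₂ u hu
    refine ⟨d₁ - d₂, hΛ₁.sub hΛ₂, ?_⟩
    have hcoef : (1 + u / τ) * τ = u - -τ := by field_simp; ring
    rw [Pi.sub_apply]
    linear_combination τ * he₁ - τ * he₂ - (d₁ - d₂) * hcoef
  intro u hu
  exact sub_eq_zero.1 <| eqOn_zero_of_singular_ode (continuousOn_const.mul hf)
    (mul_pos hτ hfτ) (hc₁.sub hc₂) hode hu

/-- uniqueness of continuous solutions of the singular ODE
`(1 + u/τ)·Λ'(u) + f(u)·Λ(u) - g(u) = 0` on `[-τ, ∞)` when `f(-τ) > 0`. -/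
theorem stmt1 (τ : ℝ) (hτ : 0 < τ) (f g : ℝ → ℝ)
    (hf : ContinuousOn f (Set.Ici (-τ))) (hg : ContinuousOn g (Set.Ici (-τ)))
    (hfτ : 0 < f (-τ))
    (Λ₁ Λ₂ : ℝ → ℝ)
    (hc₁ : ContinuousOn Λ₁ (Set.Ici (-τ))) (hc₂ : ContinuousOn Λ₂ (Set.Ici (-τ)))
    (hd₁ : ∀ u, -τ < u → ∃ d : ℝ, HasDerivAt Λ₁ d u ∧
      (1 + u / τ) * d + f u * Λ₁ u - g u = 0)
    (hd₂ : ∀ u, -τ < u → ∃ d : ℝ, HasDerivAt Λ₂ d u ∧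
      (1 + u / τ) * d + f u * Λ₂ u - g u = 0) :
    ∀ u ∈ Set.Ici (-τ), Λ₁ u = Λ₂ u :=
  stmt1_general τ hτ f g hf hfτ Λ₁ Λ₂ hc₁ hc₂ hd₁ hd₂
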